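/- Let k ≥ 3 and N ≥ 1 be integers and r, s integers. Define for τ in the upper half-plane h_{k,N,r,s}(τ) = (1/2)·((k−1)!/(2πi)^k)·Σ_{(n_1,n_2) ∈ Z²∖{(0,0)}} exp(2πi(n_1 s − n_2 r)/N)/(n_1 + n_2 τ)^k, the sum being absolutely convergent. Then for every matrix γ = (a b; c d) ∈ SL_2(Z) and every τ in the upper half-plane, h_{k,N,r,s}((aτ+b)/(cτ+d)) = (cτ+d)^k · h_{k,N,rd+sb,rc+sa}(τ). -/

import Mathlib

/-!
Substituting `τ ↦ (aτ+b)/(cτ+d)` turns `n₁ + n₂τ` into `(m₁ + m₂τ)/(cτ+d)` with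
`(m₁, m₂) = (n₁d + n₂b, n₁c + n₂a)`. Since `ad - bc = 1` this change of variables is a bijection
of `ℤ² ∖ {0}`, and it carries the character `n₁s - n₂r` to `m₁(rc+sa) - m₂(rd+sb)`, so
reindexing the lattice sum gives the transformation law.
-/

/-- The Eisenstein series `h_{k,N,r,s}(τ)` for `Γ(N)`, defined by the lattice sum
`(1/2)((k-1)!/(2πi)^k) Σ_{(n₁,n₂)≠(0,0)} e^{2πi(n₁s - n₂r)/N}/(n₁+n₂τ)^k`. -/
noncomputable def eisensteinH (k N : ℕ) (r s : ℤ) (τ : ℂ) : ℂ :=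
  (1 / 2) * ((Nat.factorial (k - 1) : ℂ) / (2 * (Real.pi : ℂ) * Complex.I) ^ k) *
    ∑' p : {p : ℤ × ℤ // p ≠ 0},
      Complex.exp (2 * (Real.pi : ℂ) * Complex.I *
          ((p.1.1 : ℂ) * (s : ℂ) - (p.1.2 : ℂ) * (r : ℂ)) / (N : ℂ)) /
        ((p.1.1 : ℂ) + (p.1.2 : ℂ) * τ) ^ k

open Complex

noncomputable def eisensteinHTerm (k N : ℕ) (r s : ℤ) (τ : ℂ) (p : ℤ × ℤ) : ℂ :=
  exp (2 * (Real.pi : ℂ) * I * ((p.1 : ℂ) * (s : ℂ) - (p.2 : ℂ) * (r : ℂ)) / (N : ℂ)) /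
    ((p.1 : ℂ) + (p.2 : ℂ) * τ) ^ k

theorem eisensteinH_eq_tsum (k N : ℕ) (r s : ℤ) (τ : ℂ) :
    eisensteinH k N r s τ =
      (1 / 2) * ((Nat.factorial (k - 1) : ℂ) / (2 * (Real.pi : ℂ) * I) ^ k) *
        ∑' p : {p : ℤ × ℤ // p ≠ 0}, eisensteinHTerm k N r s τ p :=
  rfl

theorem int_mul_add_ne_zero {τ : ℂ} (hτ : 0 < τ.im) {c d : ℤ} (hcd : (c, d) ≠ 0) :
    (c : ℂ) * τ + d ≠ 0 := by
  intro h
  have hc : c = 0 := by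
    have him := congr_arg im h
    simp only [add_im, mul_im, intCast_re, intCast_im, zero_mul, add_zero, zero_im] at him
    exact_mod_cast (mul_eq_zero.mp him).resolve_right hτ.ne'
  subst hc
  simp only [Int.cast_zero, zero_mul, zero_add, Int.cast_eq_zero] at h
  exact hcd (by simp [h])

def intPairEquivOfDet (a b c d : ℤ) (hdet : a * d - b * c = 1) : ℤ × ℤ ≃ ℤ × ℤ where
  toFun p := (p.1 * d + p.2 * b, p.1 * c + p.2 * a)
  invFun q := (q.1 * a - q.2 * b, q.2 * d - q.1 * c)
  left_inv p := by
    ext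
    · dsimp; linear_combination p.1 * hdet
    · dsimp; linear_combination p.2 * hdet
  right_inv q := by
    ext
    · dsimp; linear_combination q.1 * hdet
    · dsimp; linear_combination q.2 * hdet

def intPairNeZeroEquivOfDet (a b c d : ℤ) (hdet : a * d - b * c = 1) :
    {p : ℤ × ℤ // p ≠ 0} ≃ {p : ℤ × ℤ // p ≠ 0} :=
  (intPairEquivOfDet a b c d hdet).subtypeEquiv fun _ =>
    ((intPairEquivOfDet a b c d hdet).injective.ne_iff' (by simp [intPairEquivOfDet])).symm

theorem add_mul_moebius_eq_div {K : Type*} [Field K] (n₁ n₂ a b c d τ : K) (hD : c * τ + d ≠ 0) :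
    n₁ + n₂ * ((a * τ + b) / (c * τ + d)) =
      ((n₁ * d + n₂ * b) + (n₁ * c + n₂ * a) * τ) / (c * τ + d) := by
  rw [mul_div_assoc', add_div' _ _ _ hD]
  ring

theorem character_arg_eq_of_det {a b c d : ℤ} (hdet : a * d - b * c = 1) (r s n₁ n₂ : ℤ) :
    n₁ * s - n₂ * r =
      (n₁ * d + n₂ * b) * (r * c + s * a) - (n₁ * c + n₂ * a) * (r * d + s * b) := by
  linear_combination -(n₁ * s - n₂ * r) * hdet

theorem eisensteinHTerm_moebius (k N : ℕ) (r s : ℤ) {a b c d : ℤ} (hdet : a * d - b * c = 1)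
    {τ : ℂ} (hD : (c : ℂ) * τ + d ≠ 0) (p : ℤ × ℤ) :
    eisensteinHTerm k N r s (((a : ℂ) * τ + b) / ((c : ℂ) * τ + d)) p =
      ((c : ℂ) * τ + d) ^ k *
        eisensteinHTerm k N (r * d + s * b) (r * c + s * a) τ (intPairEquivOfDet a b c d hdet p) := by
  have harg := congr_arg (fun n : ℤ => (n : ℂ)) (character_arg_eq_of_det hdet r s p.1 p.2)
  push_cast at harg
  simp only [eisensteinHTerm, intPairEquivOfDet, Equiv.coe_fn_mk]
  rw [add_mul_moebius_eq_div _ _ _ _ _ _ _ hD, div_pow, harg]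
  push_cast
  field_simp

theorem eisensteinH_modular_transformation (k N : ℕ)
    (r s : ℤ) (a b c d : ℤ) (hdet : a * d - b * c = 1) (τ : ℂ) (hτ : 0 < τ.im) :
    eisensteinH k N r s (((a : ℂ) * τ + (b : ℂ)) / ((c : ℂ) * τ + (d : ℂ))) =
      ((c : ℂ) * τ + (d : ℂ)) ^ k * eisensteinH k N (r * d + s * b) (r * c + s * a) τ := by
  have hcd : (c, d) ≠ 0 := by
    intro h
    obtain ⟨rfl, rfl⟩ := Prod.mk_eq_zero.mp h
    simp at hdet
  have hD := int_mul_add_ne_zero hτ hcd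
  rw [eisensteinH_eq_tsum, eisensteinH_eq_tsum, mul_left_comm (((c : ℂ) * τ + d) ^ k),
    ← tsum_mul_left (a := ((c : ℂ) * τ + d) ^ k)]
  congr 1
  simp_rw [eisensteinHTerm_moebius k N r s hdet hD]
  exact (intPairNeZeroEquivOfDet a b c d hdet).tsum_eq
    fun q => ((c : ℂ) * τ + d) ^ k * eisensteinHTerm k N (r * d + s * b) (r * c + s * a) τ q
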